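/- arXiv:1812.10669 — 3 statements merged into one kernel-verified Lean document; each statement's English description precedes it below -/
import Mathlib

section
/- If a real Banach space X is fully Mackey complete, then every closed linear subspace X₀ ⊆ X is fully Mackey complete. -/
open Filter Topology

noncomputable section

variable (X : Type*) [NormedAddCommGroup X] [NormedSpace ℝ X]

/-- The dual norm of an element of the weak-star dual. -/
def dnorm (y : WeakDual ℝ X) : ℝ := ‖WeakDual.toStrongDual y‖

/-- A subspace `Y ⊆ X*` is norming if there is `c > 0` with
`c·‖x‖ ≤ sup {y x : y ∈ Y, ‖y‖ ≤ 1}` for every `x ∈ X`. -/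
def IsNorming (Y : Submodule ℝ (WeakDual ℝ X)) : Prop :=
  ∃ c > 0, ∀ x : X, c * ‖x‖ ≤ sSup {r : ℝ | ∃ y ∈ Y, dnorm X y ≤ 1 ∧ r = y x}

/-- `Y` is closed for the dual norm topology of `X*`. -/
def NormClosed (Y : Submodule ℝ (WeakDual ℝ X)) : Prop :=
  IsClosed ((fun y => WeakDual.toStrongDual y) '' (Y : Set (WeakDual ℝ X)))

/-- A linear functional on `Y ⊆ X*` is weak-star sequentially continuous. -/
def WStarSeqCont {Y : Submodule ℝ (WeakDual ℝ X)} (f : Y →ₗ[ℝ] ℝ) : Prop :=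
  ∀ (u : ℕ → Y) (y : Y),
    Tendsto (fun n => (u n : WeakDual ℝ X)) atTop (𝓝 (y : WeakDual ℝ X)) →
      Tendsto (fun n => f (u n)) atTop (𝓝 (f y))

/-- `(Y, w*)` has the Mazur property: every weak-star sequentially continuous
linear functional on `Y` is weak-star continuous. -/
def MazurProp (Y : Submodule ℝ (WeakDual ℝ X)) : Prop :=
  ∀ f : Y →ₗ[ℝ] ℝ, WStarSeqCont X f → Continuous f

/-- `X` is fully Mazur. -/
def FullyMazur : Prop :=
  ∀ Y : Submodule ℝ (WeakDual ℝ X), IsNorming X Y → NormClosed X Y → MazurProp X Y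

/-- The Grothendieck condition on a linear functional `f : Y → ℝ`: the restriction of `f`
to every absolutely convex weak-star compact subset of `Y` is weak-star continuous. -/
def GrothendieckCond {Y : Submodule ℝ (WeakDual ℝ X)} (f : Y →ₗ[ℝ] ℝ) : Prop :=
  ∀ K : Set (WeakDual ℝ X), K ⊆ (Y : Set (WeakDual ℝ X)) → Convex ℝ K → Balanced ℝ K →
    IsCompact K → ContinuousOn (fun y : Y => f y) (Subtype.val ⁻¹' K)

/-- Completeness of the Mackey space `(X, μ(X,Y))`, via Grothendieck's criterion. -/
def MackeyComplete (Y : Submodule ℝ (WeakDual ℝ X)) : Prop :=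
  ∀ f : Y →ₗ[ℝ] ℝ, GrothendieckCond X f → Continuous f

/-- `X` is fully Mackey complete. -/
def FullyMackeyComplete : Prop :=
  ∀ Y : Submodule ℝ (WeakDual ℝ X), IsNorming X Y → NormClosed X Y → MackeyComplete X Y

/-- `S₁(A)`: the set of weak-star limits of sequences contained in `A`. -/
def S1 (A : Set (WeakDual ℝ X)) : Set (WeakDual ℝ X) :=
  {z | ∃ u : ℕ → WeakDual ℝ X, (∀ n, u n ∈ A) ∧ Tendsto u atTop (𝓝 z)}

end

/-!
Let `Z ⊆ X*` be the functionals whose restriction to `X₀` lies in `Y`. By Hahn–Banach,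
restriction maps `Z` onto `Y`; `Z` is norm-closed, and it is norming because it contains the
annihilator of `X₀` together with norm-preserving extensions of the elements of `Y`. Restriction
is linear and w*-continuous, so it maps absolutely convex w*-compact sets to such sets, and a
functional `f` on `Y` satisfying Grothendieck's condition lifts to one on `Z`. By full Mackey
completeness of `X` the lift is w*-continuous, i.e. evaluation at some `x ∈ X`; it vanishes on
the annihilator of `X₀`, so `x ∈ X₀`, and `f` is evaluation at `x`.
-/

theorem LinearMap.exists_eq_apply_of_continuous_of_isInducing {𝕜 E F : Type*}
    [NontriviallyNormedField 𝕜] [AddCommGroup E] [Module 𝕜 E] [AddCommGroup F] [Module 𝕜 F]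
    [TopologicalSpace F] (B : F →ₗ[𝕜] E →ₗ[𝕜] 𝕜) (hB : IsInducing fun z x => B z x)
    (g : F →ₗ[𝕜] 𝕜) (hg : Continuous g) : ∃ x : E, ∀ z, g z = B z x := by
  have hg' : g ∈ Submodule.span 𝕜 (Set.range B.flip) := by
    rw [hB.eq_induced, induced_to_pi] at hg
    exact (LinearMap.mem_span_iff_continuous g).mpr hg
  rw [← LinearMap.coe_range, Submodule.span_eq] at hg'
  obtain ⟨x, rfl⟩ := hg'
  exact ⟨x, fun _ => rfl⟩

theorem Balanced.linear_image {𝕜 E F : Type*} [SeminormedRing 𝕜] [AddCommMonoid E] [Module 𝕜 E]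
    [AddCommMonoid F] [Module 𝕜 F] {s : Set E} (hs : Balanced 𝕜 s) (f : E →ₗ[𝕜] F) :
    Balanced 𝕜 (f '' s) := by
  rintro a ha _ ⟨_, ⟨x, hx, rfl⟩, rfl⟩
  exact ⟨a • x, hs a ha (Set.smul_mem_smul_set hx), map_smul f a x⟩

namespace WeakDual

section transpose

variable {𝕜 E F : Type*} [CommSemiring 𝕜] [TopologicalSpace 𝕜] [ContinuousAdd 𝕜]
  [ContinuousConstSMul 𝕜 𝕜] [AddCommMonoid E] [Module 𝕜 E] [TopologicalSpace E]
  [AddCommMonoid F] [Module 𝕜 F] [TopologicalSpace F]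

noncomputable def transpose (T : E →L[𝕜] F) : WeakDual 𝕜 F →L[𝕜] WeakDual 𝕜 E where
  toFun z := StrongDual.toWeakDual (toStrongDual z ∘L T)
  map_add' _ _ := rfl
  map_smul' _ _ := rfl
  cont := continuous_of_continuous_eval fun x => eval_continuous (T x)

end transpose

theorem exists_eq_eval_of_continuous {𝕜 E : Type*} [NontriviallyNormedField 𝕜]
    [AddCommGroup E] [Module 𝕜 E] [TopologicalSpace E]
    (Z : Submodule 𝕜 (WeakDual 𝕜 E)) (g : Z →ₗ[𝕜] 𝕜) (hg : Continuous g) :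
    ∃ x : E, ∀ z : Z, g z = (z : WeakDual 𝕜 E) x := by
  obtain ⟨x, hx⟩ := LinearMap.exists_eq_apply_of_continuous_of_isInducing (F := Z)
    ((topDualPairing 𝕜 E).comp (toStrongDual.toLinearMap.comp Z.subtype))
    ((show IsInducing fun (z : WeakDual 𝕜 E) (x : E) => z x from ⟨rfl⟩).comp .subtypeVal) g hg
  exact ⟨x, hx⟩

end WeakDual

open WeakDual

section

variable {X W : Type*} [NormedAddCommGroup X] [NormedSpace ℝ X]
  [NormedAddCommGroup W] [NormedSpace ℝ W]

theorem GrothendieckCond.comp_restrict (T : WeakDual ℝ X →L[ℝ] WeakDual ℝ W)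
    {Y : Submodule ℝ (WeakDual ℝ W)} {f : Y →ₗ[ℝ] ℝ} (hf : GrothendieckCond W f)
    {Z : Submodule ℝ (WeakDual ℝ X)} (hZ : ∀ z ∈ Z, T z ∈ Y) :
    GrothendieckCond X (f ∘ₗ (T : WeakDual ℝ X →ₗ[ℝ] WeakDual ℝ W).restrict hZ) := by
  intro K hKZ hKconv hKbal hKcomp
  have hTK := hf (T '' K) (Set.image_subset_iff.mpr fun k hk => hZ k (hKZ hk))
    (hKconv.linear_image T.toLinearMap) (hKbal.linear_image T.toLinearMap)
    (hKcomp.image T.continuous)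
  have hTcont : Continuous ((T : WeakDual ℝ X →ₗ[ℝ] WeakDual ℝ W).restrict hZ) :=
    (T.continuous.comp continuous_subtype_val).subtype_mk _
  exact hTK.comp hTcont.continuousOn fun z hz => ⟨z, hz, rfl⟩

theorem NormClosed.comap_transpose (T : W →L[ℝ] X) {Y : Submodule ℝ (WeakDual ℝ W)}
    (hY : NormClosed W Y) : NormClosed X (Y.comap (transpose T).toLinearMap) := by
  have himage : toStrongDual '' (Y.comap (transpose T).toLinearMap : Set (WeakDual ℝ X)) =
      (fun φ : StrongDual ℝ X => φ ∘L T) ⁻¹' (toStrongDual '' (Y : Set (WeakDual ℝ W))) := by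
    simp only [LinearEquiv.image_eq_preimage_symm]
    rfl
  unfold NormClosed
  rw [himage]
  exact hY.preimage ((ContinuousLinearMap.compL ℝ W X ℝ).flip T).continuous

end

section

variable {X : Type*} [NormedAddCommGroup X] [NormedSpace ℝ X]

theorem isNorming_iff {Y : Submodule ℝ (WeakDual ℝ X)} :
    IsNorming X Y ↔ ∃ c > 0, ∀ x : X, ∃ y ∈ Y, dnorm X y ≤ 1 ∧ c * ‖x‖ ≤ y x := by
  have h0 (x : X) : (0 : ℝ) ∈ {r : ℝ | ∃ y ∈ Y, dnorm X y ≤ 1 ∧ r = y x} :=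
    ⟨0, Y.zero_mem, by simp [dnorm], rfl⟩
  constructor
  · rintro ⟨c, hc, hY⟩
    refine ⟨c / 2, half_pos hc, fun x => ?_⟩
    rcases eq_or_ne x 0 with rfl | hx
    · exact ⟨0, Y.zero_mem, by simp [dnorm], by simp⟩
    have hlt : c / 2 * ‖x‖ < c * ‖x‖ := by
      have := norm_pos_iff.mpr hx
      nlinarith
    obtain ⟨_, ⟨y, hy, hy1, rfl⟩, hlt'⟩ := exists_lt_of_lt_csSup ⟨0, h0 x⟩ (hlt.trans_le (hY x))
    exact ⟨y, hy, hy1, hlt'.le⟩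
  · rintro ⟨c, hc, hY⟩
    refine ⟨c, hc, fun x => ?_⟩
    obtain ⟨y, hy, hy1, hcy⟩ := hY x
    have hbdd : BddAbove {r : ℝ | ∃ y ∈ Y, dnorm X y ≤ 1 ∧ r = y x} := by
      refine ⟨‖x‖, ?_⟩
      rintro _ ⟨y, -, hy1, rfl⟩
      calc y x ≤ ‖toStrongDual y x‖ := le_abs_self _
        _ ≤ 1 * ‖x‖ := (toStrongDual y).le_of_opNorm_le hy1 x
        _ = ‖x‖ := one_mul _
    exact le_csSup_of_le hbdd ⟨y, hy, hy1, rfl⟩ hcy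

theorem Submodule.exists_dual_eq_zero_eq_norm_mk (X₀ : Submodule ℝ X) [IsClosed (X₀ : Set X)]
    (x : X) : ∃ φ : StrongDual ℝ X, ‖φ‖ ≤ 1 ∧ (∀ m ∈ X₀, φ m = 0) ∧ φ x = ‖X₀.mkQ x‖ := by
  obtain ⟨g, hg1, hgx⟩ := exists_dual_vector'' ℝ (X₀.mkQ x)
  refine ⟨g ∘L X₀.mkQL, ContinuousLinearMap.opNorm_le_bound _ zero_le_one fun y => ?_,
    fun m hm => ?_, hgx⟩
  · calc ‖g (X₀.mkQ y)‖ ≤ 1 * ‖X₀.mkQ y‖ := g.le_of_opNorm_le hg1 _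
      _ ≤ 1 * ‖y‖ := by rw [one_mul, one_mul]; exact Submodule.Quotient.norm_mk_le X₀ y
  · simp [(Submodule.Quotient.mk_eq_zero X₀).mpr hm]

theorem Submodule.mem_of_forall_dual_eq_zero (X₀ : Submodule ℝ X) [IsClosed (X₀ : Set X)] {x : X}
    (hx : ∀ φ : StrongDual ℝ X, (∀ m ∈ X₀, φ m = 0) → φ x = 0) : x ∈ X₀ := by
  obtain ⟨φ, -, hφ, hφx⟩ := X₀.exists_dual_eq_zero_eq_norm_mk x
  rwa [hx φ hφ, eq_comm, norm_eq_zero, Submodule.mkQ_apply, Submodule.Quotient.mk_eq_zero] at hφx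

variable {X₀ : Submodule ℝ X}

theorem WeakDual.exists_transpose_subtypeL_eq (y : WeakDual ℝ X₀) :
    ∃ z : WeakDual ℝ X, transpose X₀.subtypeL z = y ∧ dnorm X z = dnorm X₀ y := by
  obtain ⟨z, hz, hzn⟩ := exists_extension_norm_eq X₀ (toStrongDual y)
  exact ⟨StrongDual.toWeakDual z, ContinuousLinearMap.ext hz, hzn⟩

theorem WeakDual.transpose_subtypeL_eq_zero {z : WeakDual ℝ X} (hz : ∀ m ∈ X₀, z m = 0) :
    transpose X₀.subtypeL z = 0 :=
  ContinuousLinearMap.ext fun m => hz m m.2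

theorem IsNorming.comap_transpose_subtypeL [IsClosed (X₀ : Set X)]
    {Y : Submodule ℝ (WeakDual ℝ X₀)} (hY : IsNorming X₀ Y) :
    IsNorming X (Y.comap (transpose X₀.subtypeL).toLinearMap) := by
  obtain ⟨c, hc, hY⟩ := isNorming_iff.mp hY
  -- `δ = c / (c + 2)` balances the two cases below: `c * (1 - δ) - δ = δ`.
  set δ := c / (c + 2)
  have hδ : 0 < δ := by positivity
  have hδc : (c + 1) * δ = c - δ := by simp only [δ]; field_simp; ring
  refine isNorming_iff.mpr ⟨δ, hδ, fun x => ?_⟩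
  by_cases hfar : δ * ‖x‖ ≤ ‖X₀.mkQ x‖
  · obtain ⟨φ, hφ1, hφ, hφx⟩ := X₀.exists_dual_eq_zero_eq_norm_mk x
    refine ⟨StrongDual.toWeakDual φ, ?_, hφ1, hφx ▸ hfar⟩
    change transpose _ _ ∈ Y
    rw [transpose_subtypeL_eq_zero (z := StrongDual.toWeakDual φ) hφ]
    exact Y.zero_mem
  · push Not at hfar
    obtain ⟨m, hm, hmx⟩ := Submodule.Quotient.norm_mk_lt (X₀.mkQ x) (sub_pos.mpr hfar)
    have hx₀ : x - m ∈ X₀ := (Submodule.Quotient.eq X₀).mp hm.symm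
    obtain ⟨y, hy, hy1, hyx⟩ := hY ⟨x - m, hx₀⟩
    obtain ⟨z, rfl, hz⟩ := exists_transpose_subtypeL_eq y
    refine ⟨z, hy, hz ▸ hy1, ?_⟩
    have hzm : -‖m‖ ≤ z m := by
      have := (toStrongDual z).le_of_opNorm_le (hz ▸ hy1) m
      rw [one_mul, Real.norm_eq_abs] at this
      exact neg_le_of_abs_le this
    have hxm := mul_le_mul_of_nonneg_left (norm_sub_norm_le x m) hc.le
    have hmδ := mul_le_mul_of_nonneg_left (by linarith : ‖m‖ ≤ δ * ‖x‖) (by linarith : 0 ≤ c + 1)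
    calc δ * ‖x‖ = c * ‖x‖ - (c + 1) * (δ * ‖x‖) := by rw [← mul_assoc, hδc]; ring
      _ ≤ c * ‖x - m‖ - ‖m‖ := by linarith
      _ ≤ z (x - m) + z m := add_le_add hyx hzm
      _ = z x := by rw [← map_add, sub_add_cancel]

end

theorem statement4_general (X : Type*) [NormedAddCommGroup X] [NormedSpace ℝ X]
    (h : FullyMackeyComplete X) (X₀ : Submodule ℝ X) (hX₀ : IsClosed (X₀ : Set X)) :
    FullyMackeyComplete ↥X₀ := by
  intro Y hYnorm hYclosed f hf
  set T := transpose X₀.subtypeL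
  set Z := Y.comap T.toLinearMap
  have hZ : ∀ z ∈ Z, T z ∈ Y := fun _ hz => hz
  obtain ⟨x, hx⟩ := exists_eq_eval_of_continuous Z _ <|
    h Z hYnorm.comap_transpose_subtypeL (hYclosed.comap_transpose _) _ (hf.comp_restrict T hZ)
  have hxX₀ : x ∈ X₀ := X₀.mem_of_forall_dual_eq_zero fun φ hφ => by
    have hTφ := transpose_subtypeL_eq_zero (z := StrongDual.toWeakDual φ) hφ
    have hφZ : StrongDual.toWeakDual φ ∈ Z := show T _ ∈ Y from hTφ ▸ Y.zero_mem
    calc φ x = f ⟨T (StrongDual.toWeakDual φ), hφZ⟩ := (hx ⟨_, hφZ⟩).symm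
      _ = f 0 := congrArg f (Subtype.ext hTφ)
      _ = 0 := map_zero f
  have hf_eval : ∀ y : Y, f y = (y : WeakDual ℝ X₀) ⟨x, hxX₀⟩ := fun y => by
    obtain ⟨z, hzy, -⟩ := exists_transpose_subtypeL_eq (y : WeakDual ℝ X₀)
    have hzZ : z ∈ Z := show T z ∈ Y from hzy ▸ y.2
    calc f y = f ⟨T z, hzZ⟩ := congrArg f (Subtype.ext hzy.symm)
      _ = z x := hx ⟨z, hzZ⟩
      _ = (y : WeakDual ℝ X₀) ⟨x, hxX₀⟩ := by rw [← hzy]; rfl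
  rw [show ⇑f = fun y : Y => (y : WeakDual ℝ X₀) ⟨x, hxX₀⟩ from funext hf_eval]
  exact (eval_continuous _).comp continuous_subtype_val

/-- If a Banach space `X` is fully Mackey complete, then every closed linear
subspace of `X` is fully Mackey complete. -/
theorem statement4 (X : Type*) [NormedAddCommGroup X] [NormedSpace ℝ X] [CompleteSpace X]
    (h : FullyMackeyComplete X) (X₀ : Submodule ℝ X) (hX₀ : IsClosed (X₀ : Set X)) :
    FullyMackeyComplete ↥X₀ :=
  statement4_general X h X₀ hX₀
end

section
/- Let X be a real Banach space and Y ⊆ X* a w*-dense and norm-closed subspace. Then: (1) every linear functional f : Y → ℝ whose restriction to each absolutely convex w*-compact subset of Y is w*-continuous is w*-sequentially continuous; and (2) every w*-sequentially continuous linear functional f : Y → ℝ is norm-bounded, i.e., there is M ≥ 0 with |f(y*)| ≤ M·‖y*‖ for all y* ∈ Y. -/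
open Filter Topology

/-!
For (1), subtracting the limit reduces to a `w*`-null sequence `vₙ`, which is norm bounded by
Banach–Steinhaus, say `‖vₙ‖ ≤ 1`. The set `K = {∑ tₙ vₙ : ∑ |tₙ| ≤ 1}` is absolutely convex, lies in
`Y` because `Y` is norm closed, and is `w*`-compact: it is the image of the `ℓ¹` ball, compact for
the product topology, under a map that is `w*`-continuous because the tails `∑_{n ≥ N} tₙ vₙ(x)` are
uniformly small when `vₙ(x) → 0`. Since `vₙ → 0` inside `K`, the Grothendieck condition gives
`f(vₙ) → 0`. For (2), norm-null sequences are `w*`-null, and a linear functional sending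
norm-null sequences to null sequences is bounded.
-/

/-- The closed unit ball of `ℓ¹`, inside `ℕ → ℝ` so that it is compact for the product
topology. -/
def l1UnitBall : Set (ℕ → ℝ) := {t | ∀ s : Finset ℕ, ∑ n ∈ s, |t n| ≤ 1}

section L1UnitBall

variable {t : ℕ → ℝ}

lemma summable_abs_of_mem_l1UnitBall (ht : t ∈ l1UnitBall) : Summable fun n => |t n| :=
  summable_of_sum_range_le (fun _ => abs_nonneg _) fun n => ht (Finset.range n)

lemma tsum_abs_le_one_of_mem_l1UnitBall (ht : t ∈ l1UnitBall) : ∑' n, |t n| ≤ 1 :=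
  (summable_abs_of_mem_l1UnitBall ht).tsum_le_of_sum_range_le fun n => ht (Finset.range n)

lemma isCompact_l1UnitBall : IsCompact l1UnitBall := by
  have hclosed : IsClosed l1UnitBall := by
    simp only [l1UnitBall, Set.ofPred_forall]
    exact isClosed_iInter fun s => isClosed_le
      (continuous_finsetSum s fun n _ => (continuous_apply n).abs) continuous_const
  refine (isCompact_univ_pi fun _ => isCompact_Icc (a := (-1 : ℝ)) (b := 1)).of_isClosed_subset
    hclosed fun t ht n _ => abs_le.mp ?_
  simpa using ht {n}

lemma smul_mem_l1UnitBall {c : ℝ} (hc : |c| ≤ 1) (ht : t ∈ l1UnitBall) : c • t ∈ l1UnitBall :=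
  fun s => calc
    ∑ n ∈ s, |(c • t) n| = |c| * ∑ n ∈ s, |t n| := by simp [abs_mul, Finset.mul_sum]
    _ ≤ 1 := mul_le_one₀ hc (Finset.sum_nonneg fun _ _ => abs_nonneg _) (ht s)

lemma convex_l1UnitBall : Convex ℝ l1UnitBall := by
  intro t ht r hr a b ha hb hab s
  calc ∑ n ∈ s, |(a • t + b • r) n| ≤ ∑ n ∈ s, (a * |t n| + b * |r n|) :=
        Finset.sum_le_sum fun n _ => by
          simpa [abs_mul, abs_of_nonneg ha, abs_of_nonneg hb] using abs_add_le (a * t n) (b * r n)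
    _ = a * ∑ n ∈ s, |t n| + b * ∑ n ∈ s, |r n| := by
        rw [Finset.sum_add_distrib, Finset.mul_sum, Finset.mul_sum]
    _ ≤ a * 1 + b * 1 := by gcongr; exacts [ht s, hr s]
    _ = 1 := by rw [mul_one, mul_one, hab]

lemma single_mem_l1UnitBall (n : ℕ) : Pi.single n 1 ∈ l1UnitBall := fun s => by
  simp only [Pi.single_apply, apply_ite, abs_one, abs_zero, Finset.sum_ite_eq']
  split_ifs <;> norm_num

lemma abs_tsum_mul_sub_sum_range_le {c : ℕ → ℝ} (ht : t ∈ l1UnitBall) {N : ℕ} {δ : ℝ}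
    (hc : ∀ n ≥ N, |c n| ≤ δ) :
    |∑' n, t n * c n - ∑ n ∈ Finset.range N, t n * c n| ≤ δ := by
  have hδ : 0 ≤ δ := (abs_nonneg _).trans (hc N le_rfl)
  have habs := summable_abs_of_mem_l1UnitBall ht
  have htail : Summable fun k => |t (k + N)| := (summable_nat_add_iff N).mpr habs
  have hbound : ∀ k, ‖t (k + N) * c (k + N)‖ ≤ |t (k + N)| * δ := fun k => by
    rw [Real.norm_eq_abs, abs_mul]
    exact mul_le_mul_of_nonneg_left (hc _ (Nat.le_add_left N k)) (abs_nonneg _)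
  have hsum_tail : Summable fun k => t (k + N) * c (k + N) :=
    (htail.mul_right δ).of_norm_bounded hbound
  have htail_le : ∑' k, |t (k + N)| ≤ 1 := by
    have := habs.sum_add_tsum_nat_add N
    have := Finset.sum_nonneg fun n (_ : n ∈ Finset.range N) => abs_nonneg (t n)
    linarith [tsum_abs_le_one_of_mem_l1UnitBall ht]
  have hsum : Summable fun n => t n * c n := (summable_nat_add_iff N).mp hsum_tail
  rw [← hsum.sum_add_tsum_nat_add N, add_sub_cancel_left]
  calc |∑' k, t (k + N) * c (k + N)| ≤ ∑' k, |t (k + N)| * δ :=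
        tsum_of_norm_bounded (htail.mul_right δ).hasSum hbound
    _ = (∑' k, |t (k + N)|) * δ := tsum_mul_right
    _ ≤ δ := mul_le_of_le_one_left hδ htail_le

lemma continuousOn_tsum_mul_of_tendsto_zero {c : ℕ → ℝ} (hc : Tendsto c atTop (𝓝 0)) :
    ContinuousOn (fun t : ℕ → ℝ => ∑' n, t n * c n) l1UnitBall := by
  refine TendstoUniformlyOn.continuousOn
    (F := fun N t => ∑ n ∈ Finset.range N, t n * c n) (p := atTop) ?_
    (Frequently.of_forall fun N =>
      (continuous_finsetSum _ fun n _ => (continuous_apply n).mul continuous_const).continuousOn)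
  rw [Metric.tendstoUniformlyOn_iff]
  intro ε hε
  obtain ⟨N, hN⟩ := Metric.tendsto_atTop.mp hc (ε / 2) (half_pos hε)
  filter_upwards [eventually_ge_atTop N] with M hM t ht
  rw [Real.dist_eq]
  refine (abs_tsum_mul_sub_sum_range_le ht fun n hn => ?_).trans_lt (half_lt_self hε)
  simpa using (hN n (hM.trans hn)).le

end L1UnitBall

def l1Hull {E : Type*} [NormedAddCommGroup E] [NormedSpace ℝ E] (a : ℕ → E) : Set E :=
  (fun t : ℕ → ℝ => ∑' n, t n • a n) '' l1UnitBall

section L1Hull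

variable {E : Type*} [NormedAddCommGroup E] [NormedSpace ℝ E] {a : ℕ → E}

lemma summable_smul_of_mem_l1UnitBall [CompleteSpace E] (ha : ∀ n, ‖a n‖ ≤ 1) {t : ℕ → ℝ}
    (ht : t ∈ l1UnitBall) : Summable fun n => t n • a n :=
  (summable_abs_of_mem_l1UnitBall ht).of_norm_bounded fun n => by
    simpa [norm_smul] using mul_le_of_le_one_right (abs_nonneg (t n)) (ha n)

lemma convex_l1Hull [CompleteSpace E] (ha : ∀ n, ‖a n‖ ≤ 1) : Convex ℝ (l1Hull a) := by
  rintro _ ⟨t, ht, rfl⟩ _ ⟨r, hr, rfl⟩ b c hb hc hbc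
  refine ⟨b • t + c • r, convex_l1UnitBall ht hr hb hc hbc, ?_⟩
  simp only [Pi.add_apply, Pi.smul_apply, smul_eq_mul, add_smul, mul_smul]
  rw [((summable_smul_of_mem_l1UnitBall ha ht).const_smul b).tsum_add
    ((summable_smul_of_mem_l1UnitBall ha hr).const_smul c),
    (summable_smul_of_mem_l1UnitBall ha ht).tsum_const_smul,
    (summable_smul_of_mem_l1UnitBall ha hr).tsum_const_smul]

lemma balanced_l1Hull [CompleteSpace E] (ha : ∀ n, ‖a n‖ ≤ 1) : Balanced ℝ (l1Hull a) := by
  rw [balanced_iff_smul_mem]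
  rintro c hc _ ⟨t, ht, rfl⟩
  refine ⟨c • t, smul_mem_l1UnitBall hc ht, ?_⟩
  simp only [Pi.smul_apply, smul_eq_mul, mul_smul]
  exact (summable_smul_of_mem_l1UnitBall ha ht).tsum_const_smul c

lemma mem_l1Hull (n : ℕ) : a n ∈ l1Hull a :=
  ⟨Pi.single n 1, single_mem_l1UnitBall n, by
    simp only
    rw [tsum_eq_single n fun m hm => by rw [Pi.single_eq_of_ne hm, zero_smul]]
    simp⟩

lemma l1Hull_subset {p : Submodule ℝ E} (hp : IsClosed (p : Set E)) (hap : ∀ n, a n ∈ p) :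
    l1Hull a ⊆ p := by
  rintro _ ⟨t, -, rfl⟩
  exact tsum_mem hp fun n => p.smul_mem (t n) (hap n)

end L1Hull

theorem Seminorm.exists_bound_of_tendsto_zero {E : Type*} [AddCommGroup E] [Module ℝ E]
    (p : Seminorm ℝ E) (f : E →ₗ[ℝ] ℝ)
    (hf : ∀ u : ℕ → E, Tendsto (fun n => p (u n)) atTop (𝓝 0) →
      Tendsto (fun n => f (u n)) atTop (𝓝 0)) :
    ∃ M, 0 ≤ M ∧ ∀ y, |f y| ≤ M * p y := by
  by_contra! h
  choose z hz using fun n : ℕ => h (n + 1) (by positivity)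
  have hfz : ∀ n, 0 < |f (z n)| := fun n =>
    (mul_nonneg (by positivity) (apply_nonneg p _)).trans_lt (hz n)
  set u : ℕ → E := fun n => |f (z n)|⁻¹ • z n
  have hpu : ∀ n : ℕ, p (u n) ≤ 1 / (n + 1) := fun n => by
    rw [map_smul_eq_mul, Real.norm_eq_abs, abs_inv, abs_abs, inv_mul_le_iff₀ (hfz n), mul_one_div,
      le_div_iff₀ (by positivity)]
    linarith [hz n]
  have hfu : ∀ n, |f (u n)| = 1 := fun n => by
    simp [u, abs_mul, (hfz n).ne']
  have habs := (hf u (squeeze_zero (fun n => apply_nonneg p _) hpu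
    tendsto_one_div_add_atTop_nhds_zero_nat)).abs
  simp only [hfu, abs_zero] at habs
  exact one_ne_zero (tendsto_nhds_unique tendsto_const_nhds habs)

section WeakStar

variable {X : Type*} [NormedAddCommGroup X] [NormedSpace ℝ X]

lemma isCompact_preimage_l1Hull {a : ℕ → StrongDual ℝ X} (ha : ∀ n, ‖a n‖ ≤ 1)
    (ha0 : ∀ x, Tendsto (fun n => a n x) atTop (𝓝 0)) :
    IsCompact (WeakDual.toStrongDual ⁻¹' l1Hull a) := by
  change IsCompact (StrongDual.toWeakDual.symm ⁻¹' l1Hull a)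
  rw [← LinearEquiv.image_eq_preimage_symm, l1Hull, Set.image_image]
  refine isCompact_l1UnitBall.image_of_continuousOn ?_
  rw [continuousOn_iff_continuous_domRestrict]
  refine WeakDual.continuous_of_continuous_eval fun x =>
    (continuousOn_tsum_mul_of_tendsto_zero (ha0 x)).domRestrict.congr fun t => ?_
  exact ((ContinuousLinearMap.apply ℝ ℝ x).map_tsum
    (summable_smul_of_mem_l1UnitBall ha t.2)).symm

lemma exists_dnorm_le_of_tendsto [CompleteSpace X] {u : ℕ → WeakDual ℝ X} {z : WeakDual ℝ X}
    (hu : Tendsto u atTop (𝓝 z)) : ∃ C, ∀ n, dnorm X (u n) ≤ C := by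
  have hbdd : Bornology.IsBounded (StrongDual.toWeakDual ⁻¹' Set.range u) :=
    WeakDual.isBounded_iff_isVonNBounded.mpr (hu.isVonNBounded_range ℝ)
  obtain ⟨C, hC⟩ := isBounded_iff_forall_norm_le.mp hbdd
  exact ⟨C, fun n => hC _ ⟨n, rfl⟩⟩

variable {Y : Submodule ℝ (WeakDual ℝ X)}

lemma wStarSeqCont_of_tendsto_zero {f : Y →ₗ[ℝ] ℝ}
    (hf : ∀ v : ℕ → Y, Tendsto (fun n => (v n : WeakDual ℝ X)) atTop (𝓝 0) →
      Tendsto (fun n => f (v n)) atTop (𝓝 0)) :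
    WStarSeqCont X f := by
  intro u y hu
  have h := hf (fun n => u n - y) (by simpa using hu.sub_const (y : WeakDual ℝ X))
  simpa using h.add_const (f y)

lemma tendsto_zero_of_grothendieckCond (hYc : NormClosed X Y) {f : Y →ₗ[ℝ] ℝ}
    (hf : GrothendieckCond X f) {v : ℕ → Y}
    (hv : Tendsto (fun n => (v n : WeakDual ℝ X)) atTop (𝓝 0)) (hv1 : ∀ n, dnorm X (v n) ≤ 1) :
    Tendsto (fun n => f (v n)) atTop (𝓝 0) := by
  set a : ℕ → StrongDual ℝ X := fun n => WeakDual.toStrongDual (v n : WeakDual ℝ X)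
  have ha : ∀ n, ‖a n‖ ≤ 1 := hv1
  set K := WeakDual.toStrongDual ⁻¹' l1Hull a
  have hKY : K ⊆ Y := by
    have hclosed : IsClosed (StrongDual.toWeakDual ⁻¹' (Y : Set (WeakDual ℝ X))) := by
      rw [NormClosed, LinearEquiv.image_eq_preimage_symm] at hYc
      exact hYc
    exact fun z hz => l1Hull_subset
      (p := Y.comap (StrongDual.toWeakDual : StrongDual ℝ X ≃ₗ[ℝ] WeakDual ℝ X).toLinearMap) hclosed
      (fun n => (v n).2) hz
  have hK : IsCompact K := isCompact_preimage_l1Hull ha fun x =>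
    ((WeakDual.eval_continuous x).tendsto 0).comp hv
  have hcont := hf K hKY ((convex_l1Hull ha).linear_preimage _)
    ((balanced_l1Hull ha).mulActionHom_preimage WeakDual.toStrongDual.toLinearMap.toMulActionHom)
    hK
  have hvK : ∀ n, (v n : WeakDual ℝ X) ∈ K := fun n => mem_l1Hull (a := a) n
  have h0K : ((0 : Y) : WeakDual ℝ X) ∈ K :=
    hK.isClosed.mem_of_tendsto hv (Eventually.of_forall hvK)
  have hv' : Tendsto v atTop (𝓝[Subtype.val ⁻¹' K] 0) :=
    tendsto_nhdsWithin_iff.mpr ⟨tendsto_subtype_rng.mpr hv, Eventually.of_forall hvK⟩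
  simpa [Function.comp_def] using (hcont 0 h0K).tendsto.comp hv'

theorem wStarSeqCont_of_grothendieckCond [CompleteSpace X] (hYc : NormClosed X Y)
    {f : Y →ₗ[ℝ] ℝ} (hf : GrothendieckCond X f) : WStarSeqCont X f := by
  refine wStarSeqCont_of_tendsto_zero fun v hv => ?_
  obtain ⟨C, hC⟩ := exists_dnorm_le_of_tendsto hv
  set R := max C 1
  have hR : 0 < R := lt_max_of_lt_right one_pos
  have h := tendsto_zero_of_grothendieckCond hYc hf (v := fun n => R⁻¹ • v n)
    (by simpa using hv.const_smul R⁻¹) fun n => ?_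
  · simpa [hR.ne'] using h.const_mul R
  · change ‖WeakDual.toStrongDual (R⁻¹ • (v n : WeakDual ℝ X))‖ ≤ 1
    rw [map_smul, norm_smul, Real.norm_of_nonneg (inv_nonneg.mpr hR.le), inv_mul_le_iff₀ hR,
      mul_one]
    exact (hC n).trans (le_max_left C 1)

theorem exists_bound_of_wStarSeqCont {f : Y →ₗ[ℝ] ℝ} (hf : WStarSeqCont X f) :
    ∃ M, 0 ≤ M ∧ ∀ y : Y, |f y| ≤ M * dnorm X (y : WeakDual ℝ X) := by
  refine ((normSeminorm ℝ (StrongDual ℝ X)).comp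
    (WeakDual.toStrongDual.toLinearMap ∘ₗ Y.subtype)).exists_bound_of_tendsto_zero f
    fun u hu => ?_
  have hu' : Tendsto (fun n => (u n : WeakDual ℝ X)) atTop (𝓝 0) := by
    change Tendsto (fun n => ‖WeakDual.toStrongDual (u n : WeakDual ℝ X)‖) atTop (𝓝 0) at hu
    have h := tendsto_zero_iff_norm_tendsto_zero.mpr hu
    exact (NormedSpace.Dual.toWeakDual_continuous.tendsto 0).comp h
  simpa using hf u 0 hu'

end WeakStar

theorem statement8_general (X : Type*) [NormedAddCommGroup X] [NormedSpace ℝ X] [CompleteSpace X]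
    (Y : Submodule ℝ (WeakDual ℝ X))
    (hYc : NormClosed X Y) :
    (∀ f : Y →ₗ[ℝ] ℝ, GrothendieckCond X f → WStarSeqCont X f) ∧
    (∀ f : Y →ₗ[ℝ] ℝ, WStarSeqCont X f →
      ∃ M : ℝ, 0 ≤ M ∧ ∀ y : Y, |f y| ≤ M * dnorm X (y : WeakDual ℝ X)) :=
  ⟨fun _ => wStarSeqCont_of_grothendieckCond hYc, fun _ => exists_bound_of_wStarSeqCont⟩

/-- For a weak-star dense and norm-closed subspace `Y ⊆ X*`:
(1) every linear functional on `Y` whose restriction to each absolutely convex weak-star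
compact subset of `Y` is weak-star continuous is weak-star sequentially continuous; and
(2) every weak-star sequentially continuous linear functional on `Y` is norm-bounded. -/
theorem statement8 (X : Type*) [NormedAddCommGroup X] [NormedSpace ℝ X] [CompleteSpace X]
    (Y : Submodule ℝ (WeakDual ℝ X)) (hYd : Dense (Y : Set (WeakDual ℝ X)))
    (hYc : NormClosed X Y) :
    (∀ f : Y →ₗ[ℝ] ℝ, GrothendieckCond X f → WStarSeqCont X f) ∧
    (∀ f : Y →ₗ[ℝ] ℝ, WStarSeqCont X f →
      ∃ M : ℝ, 0 ≤ M ∧ ∀ y : Y, |f y| ≤ M * dnorm X (y : WeakDual ℝ X)) :=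
  statement8_general X Y hYc
end

section
/- Let T be a topological space in which every sequence has a cluster point (T countably compact), with a distinguished point ∞ ∈ T, let X be a real Banach space, and let f : T → X be a function satisfying: (i) f(∞) = 0; (ii) the subspace Y := {x* ∈ X* : x* ∘ f is continuous on T} is norming and norm-closed; (iii) there exist ε > 0 and x*_∞ ∈ X* such that the set D := {t ∈ T : x*_∞(f(t)) > ε} intersects every Gδ-set containing ∞. Then x*_∞ ∉ Y, and for every norm-bounded set K ⊆ Y ⊕ ℝx*_∞ with x*_∞ in the w*-closure of K ∩ Y, the w*-closure of K ∩ Y is not contained in Y ⊕ ℝx*_∞; in particular no such K is w*-compact, so X fails condition (LK) and is not fully Mackey complete. -/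
open Filter Topology

/-!
Every `φ ∈ Y` is continuous along `f` and vanishes at `∞`, hence is small on a `Gδ` neighbourhood
of `∞`, which still meets `D`; in particular `x*_∞ ∉ Y`.

Suppose `x*_∞` lies in the weak-star closure of some `C ⊆ Y` with compact closure. Choosing
alternately points of `D` and elements of `C`, one gets `tₙ ∈ T` and `yₙ ∈ C` with
`yₙ(f tₘ) > ε` for `m ≤ n` and `yₘ(f tₙ) → 0`. Let `t*` be a cluster point of `(tₙ)` and `z` one
of `(yₙ)`. Continuity of `yₘ ∘ f` gives `yₘ(f t*) = 0`, so `z(f t*) = 0`, while `z(f tₘ) ≥ ε`.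
If `z = y + a x*_∞` with `y ∈ Y`, evaluating at points of `D` where `y` and all `yₙ` are small
forces `a = 0`; then `z ∘ f` is continuous and `z(f t*) ≥ ε`, a contradiction.

For full Mackey completeness, apply this to `Y ⊕ ℝx*_∞`, which is again norming and norm-closed.
The coefficient functional `y + a x*_∞ ↦ a` is discontinuous, its kernel `Y` being weak-star
dense. It is continuous on every absolutely convex weak-star compact `K`, though: otherwise
`x*_∞` would lie in the closure of `(x*_∞ + cK) ∩ Y` for some `c`.
-/

open Set

theorem MapClusterPt.eq_of_tendsto {α β : Type*} [TopologicalSpace β] [T2Space β] {a b : β}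
    {l : Filter α} {u : α → β} (ha : MapClusterPt a l u) (hb : Tendsto u l (𝓝 b)) : a = b :=
  eq_of_nhds_neBot <| ha.clusterPt.neBot.mono (inf_le_inf_left _ hb)

def gδClosure {T : Type*} [TopologicalSpace T] (s : Set T) : Set T :=
  {a | ∀ G, IsGδ G → a ∈ G → (G ∩ s).Nonempty}

theorem mem_gδClosure_iff {T : Type*} [TopologicalSpace T] {s : Set T} {a : T} :
    a ∈ gδClosure s ↔
      ∀ G : ℕ → Set T, (∀ n, IsOpen (G n)) → a ∈ ⋂ n, G n → ∃ t ∈ ⋂ n, G n, t ∈ s := by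
  refine ⟨fun h G hG ha => h _ (.iInter_of_isOpen hG) ha, fun h G hG ha => ?_⟩
  obtain ⟨G, hGo, rfl⟩ := hG.eq_iInter_nat
  exact h G hGo ha

open Submodule in
theorem Submodule.exists_ker_eq_comap_sup_span_singleton {K E : Type*} [Field K] [AddCommGroup E]
    [Module K E] {Y : Submodule K E} {ξ : E} (hξ : ξ ∉ Y) :
    ∃ g : ↥(Y ⊔ K ∙ ξ) →ₗ[K] K, LinearMap.ker g = Y.comap (Y ⊔ K ∙ ξ).subtype ∧
      g ⟨ξ, mem_sup_right (mem_span_singleton_self ξ)⟩ = 1 := by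
  let g₀ : E →ₗ.[K] K := ⟨Y, 0⟩
  let g : ↥(Y ⊔ K ∙ ξ) →ₗ[K] K := (g₀.supSpanSingleton ξ 1 hξ).toFun
  refine ⟨g, ?_, LinearPMap.supSpanSingleton_apply_self g₀ 1 hξ⟩
  ext ⟨v, hv⟩
  obtain ⟨y, hy, z, hz, rfl⟩ := mem_sup.1 hv
  obtain ⟨c, rfl⟩ := mem_span_singleton.1 hz
  have hg : g ⟨y + c • ξ, hv⟩ = c :=
    (LinearPMap.supSpanSingleton_apply_mk g₀ ξ 1 hξ y hy c).trans (by simp [g₀])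
  rw [LinearMap.mem_ker, hg, mem_comap, subtype_apply]
  refine ⟨fun hc => by simpa [hc] using hy, fun h => by_contra fun hc => hξ ?_⟩
  simpa [inv_smul_smul₀ hc] using Y.smul_mem c⁻¹ (Y.sub_mem h hy)

section Dual

variable {X : Type*} [NormedAddCommGroup X] [NormedSpace ℝ X]

theorem isCompact_closure_of_dnorm_le {C : Set (WeakDual ℝ X)} {M : ℝ}
    (hC : ∀ φ ∈ C, dnorm X φ ≤ M) : IsCompact (closure C) := by
  have hb : Bornology.IsBounded C :=
    (Metric.isBounded_closedBall (x := (0 : StrongDual ℝ X)) (r := M)).subset fun φ hφ =>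
      mem_closedBall_zero_iff.2 (hC φ hφ)
  exact WeakDual.isCompact_of_bounded_of_closed (WeakDual.isBounded_closure hb) isClosed_closure

theorem IsNorming.mono {Y Z : Submodule ℝ (WeakDual ℝ X)} (hYZ : Y ≤ Z) (hY : IsNorming X Y) :
    IsNorming X Z := by
  obtain ⟨c, hc, h⟩ := hY
  refine ⟨c, hc, fun x => (h x).trans (csSup_le_csSup ⟨‖x‖, ?_⟩ ⟨0, 0, Y.zero_mem, ?_⟩ ?_)⟩
  · rintro r ⟨y, -, hy, rfl⟩
    calc y x ≤ ‖WeakDual.toStrongDual y‖ * ‖x‖ :=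
          (le_abs_self _).trans ((WeakDual.toStrongDual y).le_opNorm x)
      _ ≤ ‖x‖ := mul_le_of_le_one_left (norm_nonneg x) hy
  · exact ⟨by simp [dnorm], rfl⟩
  · rintro r ⟨y, hy, hy1, rfl⟩
    exact ⟨y, hYZ hy, hy1, rfl⟩

theorem IsNorming.eq_zero_of_forall_apply_eq_zero {Y : Submodule ℝ (WeakDual ℝ X)}
    (hY : IsNorming X Y) {x : X} (hx : ∀ y ∈ Y, y x = 0) : x = 0 := by
  obtain ⟨c, hc, h⟩ := hY
  have hset : {r : ℝ | ∃ y ∈ Y, dnorm X y ≤ 1 ∧ r = y x} = {0} := by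
    refine Set.eq_singleton_iff_unique_mem.2 ⟨⟨0, Y.zero_mem, by simp [dnorm], rfl⟩, ?_⟩
    rintro r ⟨y, hy, -, rfl⟩
    exact hx y hy
  have := h x
  rw [hset, csSup_singleton] at this
  exact norm_le_zero_iff.1 (nonpos_of_mul_nonpos_right this hc)

theorem IsNorming.exists_eqOn_finset {Y : Submodule ℝ (WeakDual ℝ X)} (hY : IsNorming X Y)
    (φ : WeakDual ℝ X) (F : Finset X) : ∃ y ∈ Y, ∀ x ∈ F, y x = φ x := by
  classical
  let R : WeakDual ℝ X →ₗ[ℝ] (F → ℝ) :=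
    { toFun := fun ψ i => ψ i
      map_add' := fun _ _ => rfl
      map_smul' := fun _ _ => rfl }
  by_cases hφ : R φ ∈ Y.map R
  · obtain ⟨y, hy, hyφ⟩ := hφ
    exact ⟨y, hy, fun x hx => congrFun hyφ ⟨x, hx⟩⟩
  -- a functional on `F → ℝ` separating `R φ` from `R Y` is evaluation at some `x₀ ∈ span F`
  obtain ⟨ℓ, hℓφ, hℓY⟩ := Submodule.exists_dual_map_eq_bot_of_notMem hφ inferInstance
  set x₀ : X := ∑ i : F, ℓ (fun j => if i = j then 1 else 0) • (i : X)
  have hx₀ : ∀ ψ : WeakDual ℝ X, ψ x₀ = ℓ (R ψ) := fun ψ => by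
    rw [LinearMap.pi_apply_eq_sum_univ ℓ (R ψ), map_sum]
    refine Finset.sum_congr rfl fun i _ => ?_
    rw [map_smul, smul_eq_mul, smul_eq_mul, mul_comm]
    rfl
  refine absurd ?_ hℓφ
  rw [← hx₀ φ, hY.eq_zero_of_forall_apply_eq_zero (x := x₀) fun y hy => ?_, map_zero]
  rw [hx₀, ← Submodule.mem_bot ℝ, ← hℓY]
  exact Submodule.mem_map_of_mem (Submodule.mem_map_of_mem hy)

theorem IsNorming.dense {Y : Submodule ℝ (WeakDual ℝ X)} (hY : IsNorming X Y) :
    Dense (Y : Set (WeakDual ℝ X)) := fun φ => by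
  choose y hyY hy using hY.exists_eqOn_finset φ
  refine mem_closure_of_tendsto (b := (atTop : Filter (Finset X))) ?_
    (Eventually.of_forall hyY)
  rw [tendsto_iff_forall_eval_tendsto_topDualPairing]
  intro x
  refine tendsto_const_nhds.congr' ?_
  filter_upwards [eventually_ge_atTop {x}] with F hF
  exact (hy F x (hF (Finset.mem_singleton_self x))).symm

theorem NormClosed.sup_finiteDimensional {Y : Submodule ℝ (WeakDual ℝ X)}
    (hY : NormClosed X Y) (Z : Submodule ℝ (WeakDual ℝ X)) [FiniteDimensional ℝ Z] :
    NormClosed X (Y ⊔ Z) := by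
  let e : WeakDual ℝ X →ₗ[ℝ] StrongDual ℝ X := WeakDual.toStrongDual.toLinearMap
  change IsClosed ((Y.map e : Submodule ℝ (StrongDual ℝ X)) : Set (StrongDual ℝ X)) at hY
  change IsClosed (((Y ⊔ Z).map e : Submodule ℝ (StrongDual ℝ X)) : Set (StrongDual ℝ X))
  rw [Submodule.map_sup]
  exact Submodule.isClosed_sup_finiteDimensional _ _ hY

theorem WeakDual.tendsto_smul_zero {α : Type*} {l : Filter α} {c : α → ℝ}
    {v : α → WeakDual ℝ X} (hc : IsBoundedUnder (· ≤ ·) l (norm ∘ c))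
    (hv : Tendsto v l (𝓝 0)) : Tendsto (fun a => c a • v a) l (𝓝 0) := by
  rw [tendsto_iff_forall_eval_tendsto_topDualPairing] at hv ⊢
  exact fun x => isBoundedUnder_le_mul_tendsto_zero hc (hv x)

theorem mem_closure_image_inter_ker_of_not_continuousOn {Y' : Submodule ℝ (WeakDual ℝ X)}
    (g : Y' →ₗ[ℝ] ℝ) {K : Set (WeakDual ℝ X)} (hKc : Convex ℝ K) (hKb : Balanced ℝ K)
    (hg : ¬ContinuousOn (fun v : Y' => g v) (Subtype.val ⁻¹' K)) {ξ : Y'} (hξ : g ξ = 1) :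
    ∃ c : ℝ, (ξ : WeakDual ℝ X) ∈
      closure ((fun ψ => (ξ : WeakDual ℝ X) + c • ψ) '' K ∩
        (LinearMap.ker g).map Y'.subtype) := by
  simp only [ContinuousOn, not_forall] at hg
  obtain ⟨φ₀, hφ₀K, hφ₀⟩ := hg
  rw [ContinuousWithinAt, Metric.tendsto_nhds] at hφ₀
  push Not at hφ₀
  obtain ⟨ε₀, hε₀, hfreq⟩ := hφ₀
  set S : Set Y' := Subtype.val ⁻¹' K ∩ {v | ε₀ ≤ |g v - g φ₀|}
  have : (𝓝[S] φ₀).NeBot := by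
    rw [nhdsWithin_inter']
    exact frequently_iff_neBot.1 (by simpa only [Real.dist_eq] using hfreq)
  have hd : ∀ v ∈ S, ε₀ ≤ |g v - g φ₀| := fun v hv => hv.2
  -- `u v ∈ ker g`, and `u v → ξ` because the coefficient `(g v - g φ₀)⁻¹` stays bounded on `S`
  let u : Y' → Y' := fun v => ξ - (g v - g φ₀)⁻¹ • (v - φ₀)
  refine ⟨2 / ε₀, mem_closure_of_tendsto (f := fun v => (u v : WeakDual ℝ X)) (b := 𝓝[S] φ₀)
    ?_ ?_⟩
  · have hb : IsBoundedUnder (· ≤ ·) (𝓝[S] φ₀) (norm ∘ fun v => (g v - g φ₀)⁻¹) :=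
      isBoundedUnder_of_eventually_le <| eventually_nhdsWithin_of_forall fun v hv => by
        simpa using inv_anti₀ hε₀ (hd v hv)
    have hv : Tendsto (fun v : Y' => (v : WeakDual ℝ X) - φ₀) (𝓝[S] φ₀) (𝓝 0) := by
      simpa using ((continuous_subtype_val.tendsto φ₀).mono_left nhdsWithin_le_nhds).sub_const
        (φ₀ : WeakDual ℝ X)
    simpa [u] using tendsto_const_nhds.sub (WeakDual.tendsto_smul_zero hb hv)
  · filter_upwards [self_mem_nhdsWithin] with v hv
    have hne : g v - g φ₀ ≠ 0 := abs_pos.1 (hε₀.trans_le (hd v hv))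
    refine ⟨⟨(-(ε₀ / (g v - g φ₀))) • ((2⁻¹ : ℝ) • (v : WeakDual ℝ X) + (2⁻¹ : ℝ) • -φ₀),
      ?_, ?_⟩, ⟨u v, ?_, rfl⟩⟩
    · refine hKb.smul_mem ?_ (hKc hv.1 (hKb.neg_mem_iff.2 hφ₀K) ?_ ?_ ?_)
      · rw [norm_neg, Real.norm_eq_abs, abs_div, abs_of_pos hε₀]
        exact div_le_one_of_le₀ (hd v hv) (abs_nonneg _)
      all_goals norm_num
    · simp only [u, Submodule.coe_sub, Submodule.coe_smul]
      match_scalars <;> field_simp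
    · rw [SetLike.mem_coe, LinearMap.mem_ker, map_sub, map_smul, map_sub, hξ, smul_eq_mul,
        inv_mul_cancel₀ hne, sub_self]

end Dual

section Setting

variable {T : Type*} [TopologicalSpace T] {X : Type*} [NormedAddCommGroup X] [NormedSpace ℝ X]
  {f : T → X} {t₀ : T} {Y : Submodule ℝ (WeakDual ℝ X)} {ε : ℝ} {ξ : WeakDual ℝ X}

theorem exists_forall_abs_apply_lt (hY : ∀ φ ∈ Y, Continuous fun t => φ (f t)) (hf0 : f t₀ = 0)
    (hD : t₀ ∈ gδClosure {t | ε < ξ (f t)}) {S : Set (WeakDual ℝ X)} (hS : S.Countable)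
    (hSY : S ⊆ Y) {δ : ℝ} (hδ : 0 < δ) : ∃ t, ε < ξ (f t) ∧ ∀ φ ∈ S, |φ (f t)| < δ := by
  obtain ⟨t, ht, htξ⟩ := hD _
    (IsGδ.biInter_of_isOpen hS (f := fun φ => {t | |φ (f t)| < δ})
      fun φ hφ => isOpen_lt (hY φ (hSY hφ)).abs continuous_const)
    (mem_iInter₂.2 fun φ _ => by simpa [hf0] using hδ)
  exact ⟨t, htξ, fun φ hφ => mem_iInter₂.1 ht φ hφ⟩

theorem notMem_of_mem_gδClosure (hY : ∀ φ ∈ Y, Continuous fun t => φ (f t)) (hf0 : f t₀ = 0)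
    (hD : t₀ ∈ gδClosure {t | ε < ξ (f t)}) (hε : 0 < ε) : ξ ∉ Y := fun hξ => by
  obtain ⟨t, hεt, hlt⟩ := exists_forall_abs_apply_lt hY hf0 hD (countable_singleton ξ)
    (singleton_subset_iff.2 hξ) hε
  linarith [le_abs_self (ξ (f t)), hlt ξ rfl]

theorem exists_seq_of_mem_closure (hY : ∀ φ ∈ Y, Continuous fun t => φ (f t)) (hf0 : f t₀ = 0)
    (hD : t₀ ∈ gδClosure {t | ε < ξ (f t)}) {C : Set (WeakDual ℝ X)} (hCY : C ⊆ Y)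
    (hξC : ξ ∈ closure C) :
    ∃ (t : ℕ → T) (y : ℕ → WeakDual ℝ X), (∀ n, y n ∈ C) ∧
      (∀ m n, m ≤ n → ε < y n (f (t m))) ∧
      ∀ m, Tendsto (fun n => y m (f (t n))) atTop (𝓝 0) := by
  -- the `ℕ`-component `k` of a stage is a strictly increasing index controlling smallness
  let P : ℕ × T × WeakDual ℝ X → Prop := fun p =>
    ε < ξ (f p.2.1) ∧ p.2.2 ∈ C ∧ ε < p.2.2 (f p.2.1)
  let r : ℕ × T × WeakDual ℝ X → ℕ × T × WeakDual ℝ X → Prop := fun p q =>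
    p.1 < q.1 ∧ ε < q.2.2 (f p.2.1) ∧ |p.2.2 (f q.2.1)| < 1 / (q.1 + 1)
  have hstep : ∀ s : Finset (ℕ × T × WeakDual ℝ X), (∀ p ∈ s, P p) →
      ∃ q, P q ∧ ∀ p ∈ s, r p q := by
    intro s hs
    set k := s.sup Prod.fst + 1
    obtain ⟨t, hξt, ht⟩ := exists_forall_abs_apply_lt hY hf0 hD
      (s.finite_toSet.image fun p => p.2.2).countable
      (by rintro _ ⟨p, hp, rfl⟩; exact hCY (hs p hp).2.1) (δ := 1 / (k + 1)) (by positivity)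
    let U : Set (WeakDual ℝ X) :=
      {ψ | ε < ψ (f t)} ∩ ⋂ p ∈ s, {ψ | ε < ψ (f p.2.1)}
    have hU : IsOpen U := (isOpen_lt continuous_const (WeakDual.eval_continuous _)).inter <|
      isOpen_biInter_finset fun p _ => isOpen_lt continuous_const (WeakDual.eval_continuous _)
    obtain ⟨y, ⟨hyt, hys⟩, hyC⟩ :=
      mem_closure_iff.1 hξC U hU ⟨hξt, mem_iInter₂.2 fun p hp => (hs p hp).1⟩
    refine ⟨(k, t, y), ⟨hξt, hyC, hyt⟩, fun p hp => ⟨Nat.lt_succ_of_le (Finset.le_sup hp),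
      mem_iInter₂.1 hys p hp, ht _ (mem_image_of_mem _ hp)⟩⟩
  obtain ⟨w, hP, hr⟩ := exists_seq_of_forall_finset_exists P r hstep
  have hk : StrictMono fun n => (w n).1 :=
    strictMono_nat_of_lt_succ fun n => (hr n (n + 1) n.lt_succ_self).1
  refine ⟨fun n => (w n).2.1, fun n => (w n).2.2, fun n => (hP n).2.1, fun m n hmn => ?_,
    fun m => ?_⟩
  · rcases hmn.eq_or_lt with rfl | h
    exacts [(hP m).2.2, (hr m n h).2.1]
  · refine squeeze_zero_norm' ?_ tendsto_one_div_add_atTop_nhds_zero_nat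
    filter_upwards [eventually_gt_atTop m] with n hn
    refine (hr m n hn).2.2.le.trans (one_div_le_one_div_of_le (by positivity) ?_)
    exact_mod_cast Nat.add_le_add_right (hk.le_apply (x := n)) 1

theorem mem_of_mapClusterPt_of_mem_sup (hY : ∀ φ ∈ Y, Continuous fun t => φ (f t))
    (hf0 : f t₀ = 0) (hD : t₀ ∈ gδClosure {t | ε < ξ (f t)}) (hε : 0 < ε)
    {y : ℕ → WeakDual ℝ X} (hyY : ∀ n, y n ∈ Y) {z : WeakDual ℝ X} (hz : MapClusterPt z atTop y)
    (hzY : z ∈ Y ⊔ ℝ ∙ ξ) : z ∈ Y := by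
  obtain ⟨y₀, hy₀, _, hw, rfl⟩ := Submodule.mem_sup.1 hzY
  obtain ⟨a, rfl⟩ := Submodule.mem_span_singleton.1 hw
  suffices a = 0 by simpa [this] using hy₀
  by_contra ha
  have hδ : 0 < |a| * ε / 3 := by positivity
  obtain ⟨t, hξt, ht⟩ := exists_forall_abs_apply_lt hY hf0 hD ((countable_range y).insert y₀)
    (insert_subset hy₀ (range_subset_iff.2 hyY)) hδ
  have hzt : |(y₀ + a • ξ) (f t)| ≤ |a| * ε / 3 :=
    (isClosed_le continuous_abs continuous_const).mem_of_mapClusterPt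
      (hz.continuousAt_comp (WeakDual.eval_continuous (f t)).continuousAt)
      (Eventually.of_forall fun n => (ht _ (mem_insert_of_mem _ ⟨n, rfl⟩)).le)
  have hy₀t := ht y₀ (mem_insert _ _)
  have hlow : |a| * ε < |a| * ξ (f t) := mul_lt_mul_of_pos_left hξt (abs_pos.2 ha)
  have hup : |a| * ξ (f t) ≤ |(y₀ + a • ξ) (f t)| + |y₀ (f t)| :=
    calc |a| * ξ (f t) = |a * ξ (f t)| := by rw [abs_mul, abs_of_pos (hε.trans hξt)]
      _ = |(y₀ + a • ξ) (f t) - y₀ (f t)| := by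
        rw [show (y₀ + a • ξ) (f t) = y₀ (f t) + a * ξ (f t) from rfl, add_sub_cancel_left]
      _ ≤ _ := abs_sub _ _
  linarith

theorem not_closure_subset_sup (hT : ∀ u : ℕ → T, ∃ t, MapClusterPt t atTop u)
    (hY : ∀ φ ∈ Y, Continuous fun t => φ (f t)) (hf0 : f t₀ = 0)
    (hD : t₀ ∈ gδClosure {t | ε < ξ (f t)}) (hε : 0 < ε) {C : Set (WeakDual ℝ X)} (hCY : C ⊆ Y)
    (hC : IsCompact (closure C)) (hξC : ξ ∈ closure C) :
    ¬closure C ⊆ ((Y ⊔ ℝ ∙ ξ : Submodule ℝ (WeakDual ℝ X)) : Set (WeakDual ℝ X)) :=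
    fun hsub => by
  obtain ⟨t, y, hyC, hlarge, hsmall⟩ := exists_seq_of_mem_closure hY hf0 hD hCY hξC
  obtain ⟨t', ht'⟩ := hT t
  obtain ⟨z, hzC, hz⟩ := hC.exists_mapClusterPt (f := atTop) (u := y) <|
    le_principal_iff.2 (mem_map.2 (Eventually.of_forall fun n => subset_closure (hyC n)))
  have hzY : z ∈ Y :=
    mem_of_mapClusterPt_of_mem_sup hY hf0 hD hε (fun n => hCY (hyC n)) hz (hsub hzC)
  have hz_apply : ∀ x : X, MapClusterPt (z x) atTop fun n => y n x := fun x =>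
    hz.continuousAt_comp (WeakDual.eval_continuous x).continuousAt
  have hy0 : ∀ m, y m (f t') = 0 := fun m =>
    (ht'.continuousAt_comp (hY _ (hCY (hyC m))).continuousAt).eq_of_tendsto (hsmall m)
  have hz0 : z (f t') = 0 :=
    (hz_apply (f t')).eq_of_tendsto (by simpa only [hy0] using tendsto_const_nhds)
  have hzε : ε ≤ z (f t') :=
    isClosed_Ici.mem_of_mapClusterPt (ht'.continuousAt_comp (hY z hzY).continuousAt) <|
      Eventually.of_forall fun m => isClosed_Ici.mem_of_mapClusterPt (hz_apply _) <|
        (eventually_ge_atTop m).mono fun n hn => (hlarge m n hn).le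
  linarith

theorem grothendieckCond_of_ker_eq (hT : ∀ u : ℕ → T, ∃ t, MapClusterPt t atTop u)
    (hY : ∀ φ ∈ Y, Continuous fun t => φ (f t)) (hf0 : f t₀ = 0)
    (hD : t₀ ∈ gδClosure {t | ε < ξ (f t)}) (hε : 0 < ε) {g : ↥(Y ⊔ ℝ ∙ ξ) →ₗ[ℝ] ℝ}
    (hker : LinearMap.ker g = Y.comap (Y ⊔ ℝ ∙ ξ).subtype)
    (hgξ : g ⟨ξ, Submodule.mem_sup_right (Submodule.mem_span_singleton_self ξ)⟩ = 1) :
    GrothendieckCond X g := by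
  intro K hKY hKc hKb hK
  by_contra hg
  obtain ⟨c, hc⟩ := mem_closure_image_inter_ker_of_not_continuousOn g hKc hKb hg hgξ
  set L := (fun ψ => ξ + c • ψ) '' K
  have hL : IsCompact L := hK.image (continuous_const.add (continuous_const_smul c))
  have hLY : L ⊆ ((Y ⊔ ℝ ∙ ξ : Submodule ℝ (WeakDual ℝ X)) : Set (WeakDual ℝ X)) := by
    rintro _ ⟨ψ, hψ, rfl⟩
    exact add_mem (Submodule.mem_sup_right (Submodule.mem_span_singleton_self ξ))
      (Submodule.smul_mem _ c (hKY hψ))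
  have hkerY : ((LinearMap.ker g).map (Y ⊔ ℝ ∙ ξ).subtype : Set (WeakDual ℝ X)) ⊆ Y := by
    rw [hker, Submodule.map_comap_subtype]
    exact inter_subset_right
  have hLcl : closure (L ∩ Y) ⊆ L := closure_minimal inter_subset_left hL.isClosed
  exact not_closure_subset_sup hT hY hf0 hD hε inter_subset_right
    (hL.of_isClosed_subset isClosed_closure hLcl)
    (closure_mono (inter_subset_inter_right _ hkerY) hc) (hLcl.trans hLY)

theorem not_fullyMackeyComplete (hT : ∀ u : ℕ → T, ∃ t, MapClusterPt t atTop u)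
    (hY : ∀ φ ∈ Y, Continuous fun t => φ (f t)) (hf0 : f t₀ = 0)
    (hD : t₀ ∈ gδClosure {t | ε < ξ (f t)}) (hε : 0 < ε) (hYn : IsNorming X Y)
    (hYc : NormClosed X Y) : ¬FullyMackeyComplete X := fun hX => by
  obtain ⟨g, hker, hgξ⟩ :=
    Submodule.exists_ker_eq_comap_sup_span_singleton (notMem_of_mem_gδClosure hY hf0 hD hε)
  have hg : Continuous g := hX _ (hYn.mono le_sup_left) (hYc.sup_finiteDimensional _) g
    (grothendieckCond_of_ker_eq hT hY hf0 hD hε hker hgξ)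
  have hdense : Dense (LinearMap.ker g : Set ↥(Y ⊔ ℝ ∙ ξ)) := by
    rw [hker]
    refine Topology.IsInducing.subtypeVal.dense_iff.2 fun v => closure_mono ?_ (hYn.dense v)
    exact fun y hy => ⟨⟨y, Submodule.mem_sup_left hy⟩, hy, rfl⟩
  have hg0 := hg.ext_on hdense continuous_const fun v hv => hv
  simpa using (congrFun hg0 _).symm.trans hgξ

end Setting

theorem statement9_general {T : Type*} [TopologicalSpace T]
    (hT : ∀ u : ℕ → T, ∃ t : T, MapClusterPt t atTop u)
    (infty : T)
    (X : Type*) [NormedAddCommGroup X] [NormedSpace ℝ X]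
    (f : T → X) (hf0 : f infty = 0)
    (Y : Submodule ℝ (WeakDual ℝ X))
    (hYdef : ∀ φ : WeakDual ℝ X, φ ∈ Y ↔ Continuous (fun t => φ (f t)))
    (hYn : IsNorming X Y) (hYc : NormClosed X Y)
    (ε : ℝ) (hε : 0 < ε) (xinf : WeakDual ℝ X)
    (hD : ∀ G : ℕ → Set T, (∀ n, IsOpen (G n)) → (infty ∈ ⋂ n, G n) →
      ∃ t ∈ ⋂ n, G n, ε < xinf (f t)) :
    xinf ∉ Y ∧
    (∀ K : Set (WeakDual ℝ X), (∃ M : ℝ, ∀ y ∈ K, dnorm X y ≤ M) →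
      K ⊆ ((Y ⊔ Submodule.span ℝ {xinf} : Submodule ℝ (WeakDual ℝ X)) :
            Set (WeakDual ℝ X)) →
      xinf ∈ closure (K ∩ (Y : Set (WeakDual ℝ X))) →
      ¬ (closure (K ∩ (Y : Set (WeakDual ℝ X))) ⊆
          ((Y ⊔ Submodule.span ℝ {xinf} : Submodule ℝ (WeakDual ℝ X)) :
            Set (WeakDual ℝ X))) ∧ ¬ IsCompact K) ∧
    ¬ FullyMackeyComplete X := by
  have hY : ∀ φ ∈ Y, Continuous fun t => φ (f t) := fun φ hφ => (hYdef φ).1 hφ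
  have hD' : infty ∈ gδClosure {t | ε < xinf (f t)} := mem_gδClosure_iff.2 hD
  refine ⟨notMem_of_mem_gδClosure hY hf0 hD' hε, fun K ⟨M, hM⟩ hKY hξK => ?_,
    not_fullyMackeyComplete hT hY hf0 hD' hε hYn hYc⟩
  have hC := isCompact_closure_of_dnorm_le (C := K ∩ Y) fun φ hφ => hM φ hφ.1
  have hK := not_closure_subset_sup hT hY hf0 hD' hε inter_subset_right hC hξK
  exact ⟨hK, fun hKc => hK ((closure_minimal inter_subset_left hKc.isClosed).trans hKY)⟩

/-- Let `T` be countably compact with a distinguished point `∞`, and let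
`f : T → X` satisfy (i) `f(∞) = 0`, (ii) `Y = {x* : x* ∘ f continuous}` is norming and
norm-closed, (iii) there are `ε > 0` and `x*_∞` such that `D = {t : x*_∞(f t) > ε}` meets
every Gδ-set containing `∞`. Then `x*_∞ ∉ Y`; for every norm-bounded `K ⊆ Y ⊕ ℝx*_∞` with
`x*_∞` in the weak-star closure of `K ∩ Y`, the weak-star closure of `K ∩ Y` is not contained
in `Y ⊕ ℝx*_∞` and `K` is not weak-star compact; and `X` is not fully Mackey complete. -/
theorem statement9 {T : Type*} [TopologicalSpace T]
    (hT : ∀ u : ℕ → T, ∃ t : T, MapClusterPt t atTop u)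
    (infty : T)
    (X : Type*) [NormedAddCommGroup X] [NormedSpace ℝ X] [CompleteSpace X]
    (f : T → X) (hf0 : f infty = 0)
    (Y : Submodule ℝ (WeakDual ℝ X))
    (hYdef : ∀ φ : WeakDual ℝ X, φ ∈ Y ↔ Continuous (fun t => φ (f t)))
    (hYn : IsNorming X Y) (hYc : NormClosed X Y)
    (ε : ℝ) (hε : 0 < ε) (xinf : WeakDual ℝ X)
    (hD : ∀ G : ℕ → Set T, (∀ n, IsOpen (G n)) → (infty ∈ ⋂ n, G n) →
      ∃ t ∈ ⋂ n, G n, ε < xinf (f t)) :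
    xinf ∉ Y ∧
    (∀ K : Set (WeakDual ℝ X), (∃ M : ℝ, ∀ y ∈ K, dnorm X y ≤ M) →
      K ⊆ ((Y ⊔ Submodule.span ℝ {xinf} : Submodule ℝ (WeakDual ℝ X)) :
            Set (WeakDual ℝ X)) →
      xinf ∈ closure (K ∩ (Y : Set (WeakDual ℝ X))) →
      ¬ (closure (K ∩ (Y : Set (WeakDual ℝ X))) ⊆
          ((Y ⊔ Submodule.span ℝ {xinf} : Submodule ℝ (WeakDual ℝ X)) :
            Set (WeakDual ℝ X))) ∧ ¬ IsCompact K) ∧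
    ¬ FullyMackeyComplete X :=
  statement9_general hT infty X f hf0 Y hYdef hYn hYc ε hε xinf hD
end
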